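/- arXiv:1712.00229 — 2 statements merged into one kernel-verified Lean document; each statement's English description precedes it below -/
import Mathlib

section
/- For any real numbers θ and ε with ε > 0, and for fixed stopping boundaries f_1 < e_1, ..., f_{J-1} < e_{J-1}, f_J = e_J, and fixed positive information levels I_1, ..., I_J, the event ⋃_{j=1}^J [ (⋂_{l=1}^{j-1} { f_l + (τ−θ−ε)·I_l^{1/2} < Z_l ≤ e_l + (τ−θ−ε)·I_l^{1/2} }) ∩ { Z_j ≤ f_j + (τ−θ−ε)·I_j^{1/2} } ] is contained in the corresponding event with ε = 0, i.e. ⋃_{j=1}^J [ (⋂_{l=1}^{j-1} { f_l + (τ−θ)·I_l^{1/2} < Z_l ≤ e_l + (τ−θ)·I_l^{1/2} }) ∩ { Z_j ≤ f_j + (τ−θ)·I_j^{1/2} } ]. -/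
/-- Lemma 1 (Magirr et al.): shifting the stopping boundaries by a positive
amount `ε` shrinks the "acceptance" event.  Here `z j` is the value of the
test statistic at analysis `j`, `f`/`e` are the futility/efficacy boundaries
(`f j < e j` before the last analysis, `f (J-1) = e (J-1)`), and `I j > 0`
are the information levels. -/
theorem lemma1_shift_inclusion (J : ℕ) (hJ : 0 < J)
    (f e I : Fin J → ℝ)
    (hfe : ∀ j : Fin J, (j : ℕ) < J - 1 → f j < e j)
    (hlast : f ⟨J - 1, by omega⟩ = e ⟨J - 1, by omega⟩)
    (hI : ∀ j, 0 < I j)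
    (z : Fin J → ℝ) (τ θ ε : ℝ) (hε : 0 < ε)
    (h : ∃ j : Fin J,
      (∀ l : Fin J, l < j →
        f l + (τ - θ - ε) * Real.sqrt (I l) < z l ∧
          z l ≤ e l + (τ - θ - ε) * Real.sqrt (I l)) ∧
      z j ≤ f j + (τ - θ - ε) * Real.sqrt (I j)) :
    ∃ j : Fin J,
      (∀ l : Fin J, l < j →
        f l + (τ - θ) * Real.sqrt (I l) < z l ∧
          z l ≤ e l + (τ - θ) * Real.sqrt (I l)) ∧
      z j ≤ f j + (τ - θ) * Real.sqrt (I j) := by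
  obtain ⟨j, hj1, hj2⟩ := h
  have key : ∀ k : Fin J, (τ - θ - ε) * Real.sqrt (I k) ≤ (τ - θ) * Real.sqrt (I k) := by
    intro k
    have hs : 0 < Real.sqrt (I k) := Real.sqrt_pos.2 (hI k)
    nlinarith
  -- the set of indices where z falls below the unshifted lower boundary
  have hPj : z j ≤ f j + (τ - θ) * Real.sqrt (I j) :=
    hj2.trans (by linarith [key j])
  -- take a minimal such index
  obtain ⟨m, hmP, hmin⟩ := Finset.exists_min_image (Finset.univ.filter
      (fun k : Fin J => z k ≤ f k + (τ - θ) * Real.sqrt (I k))) id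
      ⟨j, Finset.mem_filter.2 ⟨Finset.mem_univ j, hPj⟩⟩
  have hmP' : z m ≤ f m + (τ - θ) * Real.sqrt (I m) := (Finset.mem_filter.1 hmP).2
  have hmj : m ≤ j := hmin j (Finset.mem_filter.2 ⟨Finset.mem_univ j, hPj⟩)
  refine ⟨m, ?_, hmP'⟩
  intro l hl
  constructor
  · by_contra hcon
    push_neg at hcon
    exact absurd (hmin l (Finset.mem_filter.2 ⟨Finset.mem_univ l, hcon⟩)) (not_le.2 hl)
  · have := (hj1 l (lt_of_lt_of_le hl hmj)).2
    linarith [key l]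
end

section
/- Strong control of the a-generalised familywise error rate: let Z = (Z_{k,j})_{k∈[K], j∈[J]} be a family of real random variables on a probability space, and for θ ∈ ℝ^K define the rejection event R_a(θ) = 'there exist at least a indices k with θ_k ≤ 0 such that Z_{k,j} > e_j + (τ_k − θ_k)I_{k,j}^{1/2} for some j ∈ [J] before Z_{k,l} ≤ f_l + (τ_k − θ_k)I_{k,l}^{1/2} occurs'. Assuming the distribution of Z under parameter θ equals the distribution of (Z_{k,j} + θ_k I_{k,j}^{1/2}) under parameter 0, then ℙ_θ(reject at least a true hypotheses) ≤ ℙ_0(reject at least a of the K hypotheses). -/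
open MeasureTheory

open scoped Classical

/-- Theorem 1: strong control of the `a`-generalised familywise error-rate.
We work with a location family: under parameter `θ`, the law of the test
statistics is that of `Z k j + θ k * √(I k j)` under the null measure `μ`.
The event that hypothesis `k` is rejected, for shift `s`, is that for some
analysis `j` the shifted statistic exceeds `e j` after lying strictly between
`f l` and `e l` at all earlier analyses `l < j`.  Then the probability of
rejecting at least `a` true hypotheses (those with `θ k ≤ 0`) under `θ` is at
most the probability of rejecting at least `a` of the `K` hypotheses under the
global null. -/
theorem generalised_FWER_strong_control
    {Ω : Type*} [MeasurableSpace Ω] (μ : Measure Ω) [IsProbabilityMeasure μ]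
    (K J : ℕ) (hK : 0 < K) (hJ : 0 < J) (a : ℕ) (ha : 1 ≤ a) (haK : a ≤ K)
    (f e : Fin J → ℝ) (I : Fin K → Fin J → ℝ)
    (hfe : ∀ j : Fin J, (j : ℕ) < J - 1 → f j < e j)
    (hlast : f ⟨J - 1, by omega⟩ = e ⟨J - 1, by omega⟩)
    (hI : ∀ k j, 0 < I k j)
    (Z : Fin K → Fin J → Ω → ℝ)
    (hZ : ∀ k j, Measurable (Z k j))
    (θ : Fin K → ℝ)
    -- rejection of hypothesis `k` under shift `s`:
    (reject : Fin K → ℝ → Ω → Prop)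
    (hreject : ∀ k s ω, reject k s ω ↔
      ∃ j : Fin J,
        (∀ l : Fin J, l < j →
          f l < Z k l ω + s * Real.sqrt (I k l) ∧
            Z k l ω + s * Real.sqrt (I k l) ≤ e l) ∧
        e j < Z k j ω + s * Real.sqrt (I k j)) :
    μ {ω | a ≤ (Finset.univ.filter
        (fun k : Fin K => θ k ≤ 0 ∧ reject k (θ k) ω)).card} ≤
      μ {ω | a ≤ (Finset.univ.filter
        (fun k : Fin K => reject k 0 ω)).card} := by
  -- Lemma 1 (shift monotonicity): raising the shift preserves rejection.
  have mono : ∀ (k : Fin K) (s s' : ℝ) (ω : Ω), s ≤ s' →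
      reject k s ω → reject k s' ω := by
    intro k s s' ω hss hrej
    rw [hreject] at hrej ⊢
    obtain ⟨j, hlj, hej⟩ := hrej
    have hshift : ∀ l : Fin J, Z k l ω + s * Real.sqrt (I k l)
        ≤ Z k l ω + s' * Real.sqrt (I k l) := by
      intro l
      have := Real.sqrt_nonneg (I k l)
      nlinarith
    -- the set of analyses `j' ≤ j` where the `s'`-statistic exceeds `e`
    have hjmem : j ∈ Finset.univ.filter
        (fun j' : Fin J => j' ≤ j ∧ e j' < Z k j' ω + s' * Real.sqrt (I k j')) := by
      simp only [Finset.mem_filter, Finset.mem_univ, true_and]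
      exact ⟨le_refl j, lt_of_lt_of_le hej (hshift j)⟩
    obtain ⟨j', hj'mem, hj'min⟩ := Finset.exists_min_image _ id ⟨j, hjmem⟩
    simp only [Finset.mem_filter, Finset.mem_univ, true_and] at hj'mem
    obtain ⟨hj'le, hj'e⟩ := hj'mem
    refine ⟨j', ?_, hj'e⟩
    intro l hl
    constructor
    · exact lt_of_lt_of_le (hlj l (lt_of_lt_of_le hl hj'le)).1 (hshift l)
    · by_contra hcon
      push_neg at hcon
      have : l ∈ Finset.univ.filter
          (fun j'' : Fin J => j'' ≤ j ∧ e j'' < Z k j'' ω + s' * Real.sqrt (I k j'')) := by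
        simp only [Finset.mem_filter, Finset.mem_univ, true_and]
        exact ⟨le_of_lt (lt_of_lt_of_le hl hj'le), hcon⟩
      have := hj'min l this
      simp only [id] at this
      exact absurd hl (not_lt.mpr this)
  apply measure_mono
  intro ω hω
  simp only [Set.mem_setOf_eq] at hω ⊢
  refine le_trans hω (Finset.card_le_card ?_)
  intro k hk
  simp only [Finset.mem_filter, Finset.mem_univ, true_and] at hk ⊢
  exact mono k (θ k) 0 ω hk.1 hk.2
end
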